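/- For every positive integer n, if c is a positive integer such that c·P' is integer-valued for every integer-valued polynomial P of degree ≤ n, then c is a multiple of lcm(1,2,...,n). -/

import Mathlib

open Polynomial

/-- A polynomial `P ∈ ℚ[X]` is integer-valued if it takes integer values at all integers. -/
def IntValued (P : Polynomial ℚ) : Prop := ∀ m : ℤ, ∃ z : ℤ, P.eval (m : ℚ) = (z : ℚ)

open scoped Nat

/-!
The binomial polynomial `B_k = X(X-1)⋯(X-k+1)/k!` is integer-valued of degree `k`, and since
`X(X-1)⋯(X-k+1)` has the simple root `k - 1` with the other factors contributing `(k-1)!` there,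
`B_k'(k-1) = 1/k`. Hence `c/k` is an integer for every `k ≤ n`, i.e. each such `k` divides `c`.
-/

noncomputable def binomialPoly (k : ℕ) : ℚ[X] :=
  C (k ! : ℚ)⁻¹ * descPochhammer ℚ k

theorem eval_binomialPoly_intCast (k : ℕ) (m : ℤ) :
    (binomialPoly k).eval (m : ℚ) = (Ring.choose m k : ℤ) := by
  have hfac : (descPochhammer ℤ k).eval m = k ! • Ring.choose m k := by
    rw [eval_eq_smeval, Ring.descPochhammer_eq_factorial_smul_choose]
  rw [binomialPoly, eval_mul, eval_C, ← descPochhammer_eval_cast, hfac, nsmul_eq_mul,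
    Int.cast_mul, Int.cast_natCast, inv_mul_cancel_left₀ (by positivity)]

theorem intValued_binomialPoly (k : ℕ) : IntValued (binomialPoly k) :=
  fun m => ⟨_, eval_binomialPoly_intCast k m⟩

@[simp]
theorem natDegree_binomialPoly (k : ℕ) : (binomialPoly k).natDegree = k := by
  rw [binomialPoly, natDegree_C_mul (by positivity), descPochhammer_natDegree]

theorem eval_derivative_descPochhammer_succ (R : Type*) [CommRing R] (k : ℕ) :
    (derivative (descPochhammer R (k + 1))).eval (k : R) = k ! := by
  rw [descPochhammer_succ_right, derivative_mul, eval_add, eval_mul, eval_mul, eval_sub, eval_X,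
    eval_natCast, sub_self, mul_zero, zero_add, derivative_sub, derivative_X,
    derivative_natCast, sub_zero, eval_one, mul_one, descPochhammer_eval_eq_descFactorial,
    Nat.descFactorial_self]

theorem eval_derivative_binomialPoly_succ (k : ℕ) :
    (derivative (binomialPoly (k + 1))).eval (k : ℚ) = ((k + 1 : ℕ) : ℚ)⁻¹ := by
  rw [binomialPoly, derivative_C_mul, eval_mul, eval_C, eval_derivative_descPochhammer_succ,
    Nat.factorial_succ, Nat.cast_mul, mul_inv, mul_assoc, inv_mul_cancel₀ (by positivity),
    mul_one]

theorem lcm_dvd_of_derivative_intValued_general (n : ℕ) (c : ℕ)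
    (h : ∀ P : Polynomial ℚ, IntValued P → P.natDegree ≤ n →
      IntValued (C (c : ℚ) * derivative P)) :
    ((Finset.Icc 1 n).lcm id : ℕ) ∣ c := by
  refine Finset.lcm_dvd fun k hk => ?_
  obtain ⟨hk1, hkn⟩ := Finset.mem_Icc.mp hk
  obtain ⟨j, rfl⟩ := Nat.exists_eq_add_one.mpr hk1
  obtain ⟨z, hz⟩ :=
    h _ (intValued_binomialPoly (j + 1)) ((natDegree_binomialPoly _).trans_le hkn) j
  rw [eval_mul, eval_C, Int.cast_natCast, eval_derivative_binomialPoly_succ,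
    ← div_eq_mul_inv, div_eq_iff (by positivity)] at hz
  have hcz : (c : ℤ) = z * (j + 1 : ℕ) := by exact_mod_cast hz
  exact Int.natCast_dvd_natCast.mp ⟨z, by rw [hcz, mul_comm, id]⟩

theorem lcm_dvd_of_derivative_intValued (n : ℕ) (hn : 0 < n) (c : ℕ) (hc : 0 < c)
    (h : ∀ P : Polynomial ℚ, IntValued P → P.natDegree ≤ n →
      IntValued (C (c : ℚ) * derivative P)) :
    ((Finset.Icc 1 n).lcm id : ℕ) ∣ c :=
  lcm_dvd_of_derivative_intValued_general n c h
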